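/- arXiv:2205.02956 — 9 statements merged into one kernel-verified Lean document; each statement's English description precedes it below -/
import Mathlib

section
/- Let Q be a symmetric invertible d×d real matrix and let X, Y be d×n real matrices such that XᵀQX = YᵀQY. If X has rank d, then there exists an invertible d×d matrix U with UᵀQU = Q such that Y = UX. -/
open Matrix

/-! A right inverse `B` of `X`, which exists because `X` has full row rank, gives the candidate
`U = Y B`. It is a `Q`-isometry since `Bᵀ (Yᵀ Q Y) B = (X B)ᵀ Q (X B) = Q`, hence invertible, so `Y`
has a right inverse as well. Then `(U X)ᵀ Q Y = Xᵀ (X B)ᵀ Q X = Yᵀ Q Y`, and cancelling the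
right-invertible `Y` and the invertible `Q` gives `U X = Y`. -/

namespace Matrix

variable {m n : Type*} [Fintype m] [DecidableEq m] [Fintype n]

theorem exists_mul_eq_one_of_rank_eq_card {K : Type*} [Field K] {A : Matrix m n K}
    (hA : A.rank = Fintype.card m) : ∃ B : Matrix n m K, A * B = 1 := by
  rw [← mulVec_surjective_iff_exists_right_inverse, ← coe_mulVecLin, ← LinearMap.range_eq_top]
  apply Submodule.eq_top_of_finrank_eq
  rw [← rank, hA, Module.finrank_fintype_fun_eq_card]

variable {R : Type*} [CommRing R] {Q : Matrix m m R}

theorem isUnit_of_transpose_mul_mul_self_eq (hQ : IsUnit Q) {U : Matrix m m R}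
    (hU : Uᵀ * Q * U = Q) : IsUnit U := by
  rw [isUnit_iff_isUnit_det] at hQ ⊢
  have hdet : U.det * U.det * Q.det = 1 * Q.det := by
    simpa only [det_mul, det_transpose, mul_right_comm _ Q.det, one_mul] using congrArg det hU
  exact IsUnit.of_mul_eq_one _ (hQ.mul_left_injective hdet)

variable {X Y : Matrix m n R} {B : Matrix n m R}

theorem transpose_mul_mul_self_eq_of_gram_eq (hGram : Xᵀ * Q * X = Yᵀ * Q * Y)
    (hXB : X * B = 1) : (Y * B)ᵀ * Q * (Y * B) = Q := by
  calc (Y * B)ᵀ * Q * (Y * B) = Bᵀ * (Yᵀ * Q * Y) * B := by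
        simp only [transpose_mul, Matrix.mul_assoc]
    _ = (X * B)ᵀ * Q * (X * B) := by
        rw [← hGram]; simp only [transpose_mul, Matrix.mul_assoc]
    _ = Q := by rw [hXB, transpose_one, Matrix.one_mul, Matrix.mul_one]

theorem mul_mul_eq_of_gram_eq (hQ : IsUnit Q) (hGram : Xᵀ * Q * X = Yᵀ * Q * Y)
    (hXB : X * B = 1) {C : Matrix n m R} (hYC : Y * C = 1) : Y * B * X = Y := by
  have hQY : (Y * B * X)ᵀ * Q * Y = Yᵀ * Q * Y := by
    calc (Y * B * X)ᵀ * Q * Y = Xᵀ * Bᵀ * (Yᵀ * Q * Y) := by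
          simp only [transpose_mul, Matrix.mul_assoc]
      _ = Xᵀ * (X * B)ᵀ * Q * X := by
          rw [← hGram]; simp only [transpose_mul, Matrix.mul_assoc]
      _ = Yᵀ * Q * Y := by rw [hXB, transpose_one, Matrix.mul_one, hGram]
  have hQ' : (Y * B * X)ᵀ * Q = Yᵀ * Q := by
    simpa only [Matrix.mul_assoc, hYC, Matrix.mul_one] using congrArg (· * C) hQY
  have hdet := (isUnit_iff_isUnit_det Q).1 hQ
  rw [← transpose_inj]
  calc (Y * B * X)ᵀ = (Y * B * X)ᵀ * Q * Q⁻¹ := (mul_nonsing_inv_cancel_right Q _ hdet).symm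
    _ = Yᵀ := by rw [hQ', mul_nonsing_inv_cancel_right Q _ hdet]

theorem exists_isometry_mul_eq_of_gram_eq (hQ : IsUnit Q) (hGram : Xᵀ * Q * X = Yᵀ * Q * Y)
    (hXB : X * B = 1) : ∃ U : Matrix m m R, IsUnit U ∧ Uᵀ * Q * U = Q ∧ Y = U * X := by
  have hU := transpose_mul_mul_self_eq_of_gram_eq hGram hXB
  have hUunit := isUnit_of_transpose_mul_mul_self_eq hQ hU
  have hYC : Y * (B * (Y * B)⁻¹) = 1 := by
    rw [← Matrix.mul_assoc, mul_nonsing_inv _ ((isUnit_iff_isUnit_det _).1 hUunit)]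
  exact ⟨Y * B, hUunit, hU, (mul_mul_eq_of_gram_eq hQ hGram hXB hYC).symm⟩

end Matrix

theorem stmt0_general (d n : ℕ) (Q : Matrix (Fin d) (Fin d) ℝ)
    (hQinv : IsUnit Q)
    (X Y : Matrix (Fin d) (Fin n) ℝ)
    (hGram : Xᵀ * Q * X = Yᵀ * Q * Y)
    (hrank : X.rank = d) :
    ∃ U : Matrix (Fin d) (Fin d) ℝ, IsUnit U ∧ Uᵀ * Q * U = Q ∧ Y = U * X := by
  obtain ⟨B, hXB⟩ := exists_mul_eq_one_of_rank_eq_card (hrank.trans (Fintype.card_fin d).symm)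
  exact exists_isometry_mul_eq_of_gram_eq hQinv hGram hXB

theorem stmt0 (d n : ℕ) (Q : Matrix (Fin d) (Fin d) ℝ)
    (hQsymm : Qᵀ = Q) (hQinv : IsUnit Q)
    (X Y : Matrix (Fin d) (Fin n) ℝ)
    (hGram : Xᵀ * Q * X = Yᵀ * Q * Y)
    (hrank : X.rank = d) :
    ∃ U : Matrix (Fin d) (Fin d) ℝ, IsUnit U ∧ Uᵀ * Q * U = Q ∧ Y = U * X :=
  stmt0_general d n Q hQinv X Y hGram hrank
end

section
/- Let Q be a symmetric positive definite d×d real matrix and let X, Y be d×n real matrices such that XᵀQX = YᵀQY. Then there exists an invertible d×d matrix U with UᵀQU = Q such that Y = UX. -/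
/-!
Write `Q = SᵀS` with `S` invertible. Then `SX` and `SY` have the same Gram matrix, so the linear
maps they define have pointwise equal norms; hence `SXv ↦ SYv` is a well-defined linear isometry
on the column space of `SX`, which extends to an orthogonal matrix `O`. The matrix `U = S⁻¹OS`
is then a `Q`-isometry with `UX = Y`.
-/

open Matrix

theorem LinearMap.exists_linearIsometryEquiv_comp_eq_of_norm_eq {𝕜 W V : Type*} [RCLike 𝕜]
    [AddCommGroup W] [Module 𝕜 W] [NormedAddCommGroup V] [InnerProductSpace 𝕜 V]
    [FiniteDimensional 𝕜 V] (f g : W →ₗ[𝕜] V) (h : ∀ x, ‖f x‖ = ‖g x‖) :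
    ∃ O : V ≃ₗᵢ[𝕜] V, (O : V →ₗ[𝕜] V) ∘ₗ f = g := by
  have hker : ker f ≤ ker g := fun x hx => by
    rw [mem_ker, ← norm_eq_zero, ← h, norm_eq_zero, ← mem_ker]
    exact hx
  let L : range f →ₗ[𝕜] V := (ker f).liftQ g hker ∘ₗ f.quotKerEquivRange.symm
  have hL : ∀ x, L ⟨f x, mem_range_self f x⟩ = g x := fun x => by
    simp [L, f.quotKerEquivRange_symm_apply_image]
  let φ : range f →ₗᵢ[𝕜] V := ⟨L, by rintro ⟨_, x, rfl⟩; simp [hL, h]⟩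
  refine ⟨φ.extend.toLinearIsometryEquiv rfl, LinearMap.ext fun x => ?_⟩
  exact (φ.extend_apply ⟨f x, mem_range_self f x⟩).trans (hL x)

theorem Matrix.inner_toEuclideanLin_toEuclideanLin {𝕜 m n : Type*} [RCLike 𝕜]
    [Fintype m] [DecidableEq m] [Fintype n] [DecidableEq n]
    (C : Matrix m n 𝕜) (x y : EuclideanSpace 𝕜 n) :
    inner 𝕜 (toEuclideanLin C x) (toEuclideanLin C y) =
      inner 𝕜 x (toEuclideanLin (Cᴴ * C) y) := by
  rw [← LinearMap.adjoint_inner_right, ← toEuclideanLin_conjTranspose_eq_adjoint,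
    toLpLin_mul_same]
  rfl

theorem Matrix.exists_mem_unitaryGroup_mul_eq_of_conjTranspose_mul_self_eq
    {𝕜 m n : Type*} [RCLike 𝕜] [Fintype m] [DecidableEq m] [Fintype n] [DecidableEq n]
    {A B : Matrix m n 𝕜} (h : Aᴴ * A = Bᴴ * B) :
    ∃ U ∈ unitaryGroup m 𝕜, B = U * A := by
  obtain ⟨O, hO⟩ := LinearMap.exists_linearIsometryEquiv_comp_eq_of_norm_eq
    (toEuclideanLin A) (toEuclideanLin B) fun x => by
      rw [@norm_eq_sqrt_re_inner 𝕜, @norm_eq_sqrt_re_inner 𝕜,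
        inner_toEuclideanLin_toEuclideanLin, inner_toEuclideanLin_toEuclideanLin, h]
  let b := (EuclideanSpace.basisFun m 𝕜).toBasis
  refine ⟨LinearMap.toMatrix b b O, O.toMatrix_mem_unitaryGroup _ _, ?_⟩
  apply toEuclideanLin.injective
  rw [toLpLin_mul_same, show toEuclideanLin (LinearMap.toMatrix b b O) = O
    from toLin_toMatrix b b _]
  exact hO.symm

theorem Matrix.nonsing_inv_mul_mul_preserves_transpose_mul_self {R n : Type*} [CommRing R]
    [Fintype n] [DecidableEq n] {S O : Matrix n n R} (hS : IsUnit S) (hO : Oᵀ * O = 1) :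
    (S⁻¹ * O * S)ᵀ * (Sᵀ * S) * (S⁻¹ * O * S) = Sᵀ * S := by
  have hSS : S * S⁻¹ = 1 := mul_nonsing_inv S ((isUnit_iff_isUnit_det S).mp hS)
  have hSS' : S⁻¹ᵀ * Sᵀ = 1 := by rw [← transpose_mul, hSS, transpose_one]
  calc (S⁻¹ * O * S)ᵀ * (Sᵀ * S) * (S⁻¹ * O * S)
      = Sᵀ * Oᵀ * (S⁻¹ᵀ * Sᵀ) * (S * S⁻¹) * O * S := by
        simp only [transpose_mul, Matrix.mul_assoc]
    _ = Sᵀ * (Oᵀ * O) * S := by simp only [hSS, hSS', Matrix.mul_one, Matrix.mul_assoc]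
    _ = Sᵀ * S := by rw [hO, Matrix.mul_one]

open scoped MatrixOrder Matrix.Norms.L2Operator in
theorem Matrix.PosDef.exists_isUnit_eq_transpose_mul_self {n : Type*} [Fintype n]
    [DecidableEq n] {Q : Matrix n n ℝ} (hQ : Q.PosDef) :
    ∃ S : Matrix n n ℝ, IsUnit S ∧ Q = Sᵀ * S :=
  CStarAlgebra.isStrictlyPositive_iff_eq_star_mul_self.mp hQ.isStrictlyPositive

theorem stmt1 (d n : ℕ) (Q : Matrix (Fin d) (Fin d) ℝ)
    (hQ : Q.PosDef)
    (X Y : Matrix (Fin d) (Fin n) ℝ)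
    (hGram : Xᵀ * Q * X = Yᵀ * Q * Y) :
    ∃ U : Matrix (Fin d) (Fin d) ℝ, IsUnit U ∧ Uᵀ * Q * U = Q ∧ Y = U * X := by
  obtain ⟨S, hS, rfl⟩ := hQ.exists_isUnit_eq_transpose_mul_self
  have hSGram : (S * X)ᴴ * (S * X) = (S * Y)ᴴ * (S * Y) := by
    simpa only [conjTranspose_eq_transpose_of_trivial, transpose_mul, Matrix.mul_assoc] using hGram
  obtain ⟨O, hO, hOY⟩ := exists_mem_unitaryGroup_mul_eq_of_conjTranspose_mul_self_eq hSGram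
  refine ⟨S⁻¹ * O * S, ?_, ?_, ?_⟩
  · exact ((isUnit_nonsing_inv_iff.mpr hS).mul (Unitary.isUnit_coe (U := ⟨O, hO⟩))).mul hS
  · exact nonsing_inv_mul_mul_preserves_transpose_mul_self hS
      ((mem_orthogonalGroup_iff' _ _).mp hO)
  · rw [Matrix.mul_assoc, Matrix.mul_assoc, ← hOY,
      nonsing_inv_mul_cancel_left _ _ ((isUnit_iff_isUnit_det S).mp hS)]
end

section
/- For d > 2, every linear SO(d)-equivariant map L: ℝ^{d×n} → ℝ^d (where SO(d) acts on ℝ^{d×n} by left multiplication and on ℝ^d by matrix-vector multiplication) is of the form L(X) = Xw for some fixed vector w ∈ ℝ^n. -/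
/-!
Restricted to matrices whose only nonzero column is the `j`-th, `L` becomes a linear endomorphism
of `ℝ^d` commuting with `SO(d)`, and its matrix `A` commutes with every special orthogonal matrix.
Since `d > 2`, for `i ≠ j` there is a third index `k`; conjugating `A` by the rotation by `π` in the
`(i, k)`-plane negates `A i j`, so `A` is diagonal, and conjugating by the permutation matrix of a
3-cycle sending `i` to `j` gives `A i i = A j j`. Hence `L` acts on the `j`-th column as a scalar
`w j`, and `L X = X w`.
-/

open Matrix

lemma Fintype.exists_ne_ne_of_two_lt_card {ι : Type*} [Fintype ι] (hι : 2 < Fintype.card ι)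
    (i j : ι) : ∃ k, k ≠ i ∧ k ≠ j := by
  classical
  obtain ⟨k, -, hk⟩ := Finset.exists_mem_notMem_of_card_lt_card
    (s := {i, j}) (t := Finset.univ) ((Finset.card_le_two).trans_lt hι)
  exact ⟨k, by simpa [not_or] using hk⟩

namespace Matrix

variable {ι : Type*} [Fintype ι] [DecidableEq ι]

lemma transpose_permMatrix_mul_self {R : Type*} [NonAssocSemiring R] (σ : Equiv.Perm ι) :
    (σ.permMatrix R)ᵀ * σ.permMatrix R = 1 := by
  rw [transpose_permMatrix, ← permMatrix_mul, mul_inv_cancel, permMatrix_one]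

lemma transpose_diagonal_mul_self {R : Type*} [NonAssocSemiring R] {s : ι → R}
    (hs : ∀ x, s x * s x = 1) :
    (diagonal s)ᵀ * diagonal s = 1 := by
  rw [diagonal_transpose, diagonal_mul_diagonal, ← diagonal_one]
  exact congrArg diagonal (funext hs)

lemma apply_eq_zero_of_commute_specialOrthogonal (hι : 2 < Fintype.card ι) {A : Matrix ι ι ℝ}
    (hA : ∀ R : Matrix ι ι ℝ, Rᵀ * R = 1 → R.det = 1 → Commute A R) {i j : ι} (hij : i ≠ j) :
    A i j = 0 := by
  obtain ⟨k, hki, hkj⟩ := Fintype.exists_ne_ne_of_two_lt_card hι i j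
  -- the rotation by `π` in the plane of the coordinates `i` and `k`
  set s : ι → ℝ := fun x => if x = i ∨ x = k then -1 else 1
  have hs : ∀ x, s x * s x = 1 := fun x => by by_cases h : x = i ∨ x = k <;> simp [s, h]
  have hdet : (diagonal s).det = 1 := by
    rw [det_diagonal, Finset.prod_ite, Finset.prod_const_one, mul_one, Finset.prod_const,
      Finset.filter_or, Finset.filter_eq', Finset.filter_eq']
    simp [Finset.card_pair hki.symm]
  have h := congrFun₂ (hA _ (transpose_diagonal_mul_self hs) hdet).eq i j
  rw [mul_diagonal, diagonal_mul] at h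
  have : s j = 1 := by simp [s, hij.symm, hkj.symm]
  simp only [s, true_or, if_true, this] at h
  linarith

lemma apply_self_eq_of_commute_specialOrthogonal (hι : 2 < Fintype.card ι) {A : Matrix ι ι ℝ}
    (hA : ∀ R : Matrix ι ι ℝ, Rᵀ * R = 1 → R.det = 1 → Commute A R) (i j : ι) :
    A i i = A j j := by
  rcases eq_or_ne i j with rfl | hij
  · rfl
  obtain ⟨k, hki, hkj⟩ := Fintype.exists_ne_ne_of_two_lt_card hι i j
  -- a 3-cycle sending `i` to `j`: even, so its permutation matrix lies in `SO`
  set σ : Equiv.Perm ι := Equiv.swap i j * Equiv.swap j k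
  have hσ : σ i = j := by simp [σ, Equiv.swap_apply_of_ne_of_ne hij hki.symm]
  have hdet : (σ.permMatrix ℝ).det = 1 := by
    simp [σ, Equiv.Perm.sign_swap hij, Equiv.Perm.sign_swap hkj.symm]
  have h := congrFun₂ (hA _ (transpose_permMatrix_mul_self σ) hdet).eq i j
  rw [PEquiv.mul_toMatrix_toPEquiv, PEquiv.toMatrix_toPEquiv_mul] at h
  simpa [← hσ] using h

theorem exists_eq_smul_one_of_commute_specialOrthogonal (hι : 2 < Fintype.card ι)
    {A : Matrix ι ι ℝ} (hA : ∀ R : Matrix ι ι ℝ, Rᵀ * R = 1 → R.det = 1 → Commute A R) :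
    ∃ c : ℝ, A = c • 1 := by
  obtain ⟨i₀⟩ : Nonempty ι := Fintype.card_pos_iff.mp (by omega)
  refine ⟨A i₀ i₀, ext fun i j => ?_⟩
  rcases eq_or_ne i j with rfl | hij
  · simp [apply_self_eq_of_commute_specialOrthogonal hι hA i i₀]
  · simp [apply_eq_zero_of_commute_specialOrthogonal hι hA hij, hij]

theorem sum_vecMulVec_transpose_single {m n α : Type*} [Fintype n] [DecidableEq n]
    [NonAssocSemiring α] (X : Matrix m n α) :
    ∑ j, vecMulVec (Xᵀ j) (Pi.single j 1) = X := by
  ext a b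
  simp [vecMulVec_apply, Matrix.sum_apply, Pi.single_apply]

end Matrix

namespace LinearMap

variable {ι : Type*} [Fintype ι] [DecidableEq ι]

theorem exists_eq_smul_of_specialOrthogonal_equivariant (hι : 2 < Fintype.card ι)
    (f : (ι → ℝ) →ₗ[ℝ] (ι → ℝ))
    (hf : ∀ R : Matrix ι ι ℝ, Rᵀ * R = 1 → R.det = 1 → ∀ v, f (R *ᵥ v) = R *ᵥ f v) :
    ∃ c : ℝ, ∀ v, f v = c • v := by
  have hcomm : ∀ R : Matrix ι ι ℝ, Rᵀ * R = 1 → R.det = 1 → Commute (toMatrix' f) R := by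
    intro R hR hdet
    have : f ∘ₗ R.toLin' = R.toLin' ∘ₗ f := LinearMap.ext fun v => hf R hR hdet v
    have := congrArg toMatrix' this
    rwa [toMatrix'_comp, toMatrix'_comp, toMatrix'_toLin'] at this
  obtain ⟨c, hc⟩ := Matrix.exists_eq_smul_one_of_commute_specialOrthogonal hι hcomm
  exact ⟨c, fun v => by rw [← toMatrix'_mulVec f, hc, smul_mulVec, one_mulVec]⟩

end LinearMap

theorem stmt3 (d n : ℕ) (hd : 2 < d)
    (L : Matrix (Fin d) (Fin n) ℝ →ₗ[ℝ] (Fin d → ℝ))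
    (hequiv : ∀ R : Matrix (Fin d) (Fin d) ℝ, Rᵀ * R = 1 → R.det = 1 →
      ∀ X : Matrix (Fin d) (Fin n) ℝ, L (R * X) = R.mulVec (L X)) :
    ∃ w : Fin n → ℝ, ∀ X : Matrix (Fin d) (Fin n) ℝ, L X = X.mulVec w := by
  have column (j : Fin n) : ∃ c : ℝ, ∀ v, L (vecMulVec v (Pi.single j 1)) = c • v :=
    LinearMap.exists_eq_smul_of_specialOrthogonal_equivariant (by simpa using hd)
      (L ∘ₗ (vecMulVecBilin ℝ ℝ).flip (Pi.single j 1)) fun R hR hdet v => by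
        simpa [mul_vecMulVec] using hequiv R hR hdet (vecMulVec v (Pi.single j 1))
  choose w hw using column
  refine ⟨w, fun X => ?_⟩
  calc L X = L (∑ j, vecMulVec (Xᵀ j) (Pi.single j 1)) := by rw [sum_vecMulVec_transpose_single]
    _ = X *ᵥ w := by simp [map_sum, hw, mulVec_eq_sum]
end

section
/- Let n ≥ d and let X, Y ∈ ℝ^{d×n} both have rank d. If for every choice of indices 1 ≤ i₁ < i₂ < ... < i_d ≤ n the determinants det(x_{i₁},...,x_{i_d}) and det(y_{i₁},...,y_{i_d}) of the corresponding d columns agree, then there exists A ∈ ℝ^{d×d} with det(A) = 1 such that Y = AX. -/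
/-!
Pick `d` columns `f` of `X` forming an invertible block `B = X_f`, let `C = Y_f`, and take
`A = C B⁻¹`; then `det A = 1` because `det C = det B`. By Cramer's rule the `i`-th coordinate of
the column `x_j` in the basis `B` is `det (X_{f[i ↦ j]}) / det B`, a ratio of maximal minors, and
likewise for `y_j` in the basis `C`. As the minors of `X` and `Y` agree (for unsorted index tuples
too, up to the same sign), `B⁻¹ X = C⁻¹ Y`, i.e. `Y = A X`.
-/

open Matrix

namespace Matrix

variable {R ι : Type*} [CommRing R]

theorem det_submatrix_eq_of_forall_strictMono [LinearOrder ι] {d : ℕ}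
    {X Y : Matrix (Fin d) ι R}
    (h : ∀ g : Fin d → ι, StrictMono g → (X.submatrix id g).det = (Y.submatrix id g).det)
    (f : Fin d → ι) : (X.submatrix id f).det = (Y.submatrix id f).det := by
  by_cases hf : Function.Injective f
  · set σ := Tuple.sort f
    have hsorted : StrictMono (f ∘ σ) :=
      (Tuple.monotone_sort f).strictMono_of_injective (hf.comp σ.injective)
    have hsign : IsUnit ((Equiv.Perm.sign σ : ℤ) : R) :=
      (Equiv.Perm.sign σ).isUnit.map (Int.castRingHom R)
    have hminor := h _ hsorted
    change ((X.submatrix id f).submatrix id σ).det =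
      ((Y.submatrix id f).submatrix id σ).det at hminor
    rw [det_permute', det_permute'] at hminor
    exact hsign.mul_left_cancel hminor
  · obtain ⟨i, j, hfij, hij⟩ : ∃ i j, f i = f j ∧ i ≠ j := by
      simpa [Function.Injective] using hf
    rw [det_zero_of_column_eq hij (by simp [hfij]), det_zero_of_column_eq hij (by simp [hfij])]

variable {m : Type*} [Fintype m] [DecidableEq m]

theorem exists_isUnit_det_submatrix_of_rank_eq_card {K : Type*} [Field K] [Fintype ι]
    (X : Matrix m ι K) (hX : X.rank = Fintype.card m) :
    ∃ f : m → ι, IsUnit (X.submatrix id f).det := by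
  obtain ⟨κ, a, ha, hspan, hli⟩ := exists_linearIndependent' K X.col
  have : Fintype κ := Fintype.ofInjective a ha
  have hcard : Fintype.card κ = Fintype.card m := by
    rw [linearIndependent_iff_card_eq_finrank_span.mp hli, Set.finrank, hspan,
      ← rank_eq_finrank_span_cols, hX]
  obtain ⟨e⟩ : Nonempty (m ≃ κ) := ⟨(Fintype.equivOfCardEq hcard).symm⟩
  refine ⟨a ∘ e, ?_⟩
  rw [← isUnit_iff_isUnit_det, ← linearIndependent_cols_iff_isUnit]
  exact hli.comp e e.injective

theorem adjugate_submatrix_mul_apply [DecidableEq ι] (X : Matrix m ι R) (f : m → ι) (i : m)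
    (j : ι) :
    (adjugate (X.submatrix id f) * X) i j = (X.submatrix id (Function.update f i j)).det := by
  have hcol :
      updateCol (X.submatrix id f) i (X.col j) = X.submatrix id (Function.update f i j) := by
    ext k l
    by_cases hl : l = i <;> simp [Function.update, hl]
  rw [← hcol, ← cramer_apply, cramer_eq_adjugate_mulVec, mulVec, mul_apply]
  rfl

theorem eq_mul_of_det_submatrix_eq [DecidableEq ι] {X Y : Matrix m ι R} (f : m → ι)
    (hf : IsUnit (X.submatrix id f).det)
    (h : ∀ g : m → ι, (X.submatrix id g).det = (Y.submatrix id g).det) :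
    Y = Y.submatrix id f * (X.submatrix id f)⁻¹ * X := by
  set B := X.submatrix id f
  set C := Y.submatrix id f
  have hadj : adjugate B * X = adjugate C * Y := by
    ext i j
    rw [adjugate_submatrix_mul_apply, adjugate_submatrix_mul_apply, h]
  have hdet : C.det = B.det := (h f).symm
  calc Y = Ring.inverse B.det • (C * adjugate C * Y) := by
        rw [mul_adjugate, hdet, Matrix.smul_mul, Matrix.one_mul, smul_smul,
          Ring.inverse_mul_cancel _ hf, one_smul]
    _ = C * B⁻¹ * X := by
        rw [Matrix.mul_assoc, ← hadj, inv_def, Matrix.mul_smul, Matrix.smul_mul, Matrix.mul_assoc]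

end Matrix

theorem stmt5_general (d n : ℕ)
    (X Y : Matrix (Fin d) (Fin n) ℝ)
    (hX : X.rank = d)
    (hminors : ∀ g : Fin d → Fin n, StrictMono g →
      (X.submatrix id g).det = (Y.submatrix id g).det) :
    ∃ A : Matrix (Fin d) (Fin d) ℝ, A.det = 1 ∧ Y = A * X := by
  obtain ⟨f, hf⟩ := X.exists_isUnit_det_submatrix_of_rank_eq_card (by simpa using hX)
  have hminors_all := det_submatrix_eq_of_forall_strictMono hminors
  refine ⟨Y.submatrix id f * (X.submatrix id f)⁻¹, ?_, eq_mul_of_det_submatrix_eq f hf hminors_all⟩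
  rw [det_mul, det_nonsing_inv, ← hminors_all f, Ring.mul_inverse_cancel _ hf]

theorem stmt5 (d n : ℕ) (hdn : d ≤ n)
    (X Y : Matrix (Fin d) (Fin n) ℝ)
    (hX : X.rank = d) (hY : Y.rank = d)
    (hminors : ∀ g : Fin d → Fin n, StrictMono g →
      (X.submatrix id g).det = (Y.submatrix id g).det) :
    ∃ A : Matrix (Fin d) (Fin d) ℝ, A.det = 1 ∧ Y = A * X :=
  stmt5_general d n X Y hX hminors
end

section
/- Let X, Y ∈ ℝ^{d×n} with n ≥ d, and suppose ‖Xw‖² + det(XW) = ‖Yw‖² + det(YW) for all w ∈ ℝ^n and all W ∈ ℝ^{n×d}. Then there exists R ∈ SO(d) such that Y = RX. -/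
/-!
Taking `W = 0` gives `‖X w‖ = ‖Y w‖` for all `w`, so the partial isometry `X w ↦ Y w` extends to
an orthogonal `R` with `Y = R X`. If `det R = -1`, then either `X` is surjective, and for a right
inverse `W` of `X` we get `det (Y W) = det R = -1 ≠ 1 = det (X W)`; or the range of `Y` is a proper
subspace, and composing `R` with the reflection in a hyperplane containing that range keeps
`Y = R X` and flips the sign of the determinant.
-/

open Matrix

section InnerProductSpace

variable {𝕜 V E : Type*} [RCLike 𝕜] [AddCommGroup V] [Module 𝕜 V]
  [NormedAddCommGroup E] [InnerProductSpace 𝕜 E] [FiniteDimensional 𝕜 E]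

theorem exists_linearIsometryEquiv_apply_eq_of_norm_eq {f g : V →ₗ[𝕜] E}
    (h : ∀ v, ‖f v‖ = ‖g v‖) : ∃ T : E ≃ₗᵢ[𝕜] E, ∀ v, T (f v) = g v := by
  have hker : LinearMap.ker f ≤ LinearMap.ker g := fun v hv => by
    rw [LinearMap.mem_ker, ← norm_eq_zero, ← h, norm_eq_zero]
    exact hv
  let L₀ : LinearMap.range f →ₗ[𝕜] E :=
    (LinearMap.ker f).liftQ g hker ∘ₗ f.quotKerEquivRange.symm.toLinearMap
  have hL₀ : ∀ v, L₀ ⟨f v, LinearMap.mem_range_self f v⟩ = g v := fun v => by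
    have : f.quotKerEquivRange.symm ⟨f v, LinearMap.mem_range_self f v⟩ =
        Submodule.Quotient.mk v :=
      (LinearEquiv.symm_apply_eq _).mpr (Subtype.ext (f.quotKerEquivRange_apply_mk v).symm)
    simp [L₀, this]
  let L : LinearMap.range f →ₗᵢ[𝕜] E :=
    { toLinearMap := L₀
      norm_map' := by
        rintro ⟨_, v, rfl⟩
        exact congrArg norm (hL₀ v) |>.trans (h v).symm }
  refine ⟨L.extend.toLinearIsometryEquiv rfl, fun v => ?_⟩
  exact (L.extend_apply ⟨f v, LinearMap.mem_range_self f v⟩).trans (hL₀ v)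

theorem Submodule.exists_linearIsometryEquiv_det_eq_neg_one_of_ne_top {K : Submodule 𝕜 E}
    (hK : K ≠ ⊤) :
    ∃ T : E ≃ₗᵢ[𝕜] E, LinearMap.det T.toLinearMap = -1 ∧ ∀ x ∈ K, T x = x := by
  obtain ⟨u, hu, hu₀⟩ := Submodule.ne_bot_iff _ |>.mp (mt K.orthogonal_eq_bot_iff.mp hK)
  refine ⟨(𝕜 ∙ u)ᗮ.reflection, ?_, fun x hx => ?_⟩
  · rw [Submodule.det_reflection, Submodule.orthogonal_orthogonal, finrank_span_singleton hu₀,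
      pow_one]
  · exact Submodule.reflection_mem_subspace_eq_self <|
      Submodule.mem_orthogonal_singleton_iff_inner_right.mpr (K.inner_left_of_mem_orthogonal hx hu)

end InnerProductSpace

section Real

variable {V E : Type*} [AddCommGroup V] [Module ℝ V]
  [NormedAddCommGroup E] [InnerProductSpace ℝ E] [FiniteDimensional ℝ E]

theorem LinearIsometryEquiv.det_eq_one_or_eq_neg_one (T : E ≃ₗᵢ[ℝ] E) :
    LinearMap.det T.toLinearMap = 1 ∨ LinearMap.det T.toLinearMap = -1 := by
  have := T.toLinearIsometry.normDet_eq_one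
  rw [LinearMap.normDet_eq_norm_det, Real.norm_eq_abs] at this
  exact abs_eq zero_le_one |>.mp this

theorem exists_linearIsometryEquiv_det_eq_one_apply_eq {f g : V →ₗ[ℝ] E}
    (hnorm : ∀ v, ‖f v‖ = ‖g v‖)
    (hdet : ∀ S : E →ₗ[ℝ] V, LinearMap.det (f ∘ₗ S) = LinearMap.det (g ∘ₗ S)) :
    ∃ T : E ≃ₗᵢ[ℝ] E, LinearMap.det T.toLinearMap = 1 ∧ ∀ v, T (f v) = g v := by
  obtain ⟨T, hT⟩ := exists_linearIsometryEquiv_apply_eq_of_norm_eq hnorm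
  rcases T.det_eq_one_or_eq_neg_one with hT₁ | hT₁
  · exact ⟨T, hT₁, hT⟩
  by_cases hf : Function.Surjective f
  · obtain ⟨S, hS⟩ := f.exists_rightInverse_of_surjective (LinearMap.range_eq_top.mpr hf)
    have hg : g = T.toLinearMap ∘ₗ f := LinearMap.ext fun v => (hT v).symm
    have := hdet S
    rw [hg, LinearMap.comp_assoc, hS, LinearMap.comp_id, LinearMap.det_id, hT₁] at this
    norm_num at this
  · have hg_ne_top : LinearMap.range g ≠ ⊤ := fun hg_top => hf fun y => by
      obtain ⟨v, hv⟩ := LinearMap.range_eq_top.mp hg_top (T y)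
      exact ⟨v, T.injective ((hT v).trans hv)⟩
    obtain ⟨F, hF₁, hF⟩ := Submodule.exists_linearIsometryEquiv_det_eq_neg_one_of_ne_top hg_ne_top
    refine ⟨T.trans F, ?_, fun v => ?_⟩
    · rw [LinearIsometryEquiv.toLinearEquiv_trans, LinearEquiv.coe_trans, LinearMap.det_comp,
        hF₁, hT₁]
      norm_num
    · simp [hT, hF _ (LinearMap.mem_range_self g v)]

end Real

namespace Matrix

theorem toLpLin_symm_mem_orthogonalGroup {m : Type*} [Fintype m] [DecidableEq m]
    (T : EuclideanSpace ℝ m ≃ₗᵢ[ℝ] EuclideanSpace ℝ m) :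
    (toLpLin 2 2).symm T.toLinearMap ∈ orthogonalGroup m ℝ :=
  T.toMatrix_mem_unitaryGroup (EuclideanSpace.basisFun m ℝ) (EuclideanSpace.basisFun m ℝ)

theorem norm_toLpLin_sq {m n : Type*} [Fintype m] [Fintype n] [DecidableEq n] (X : Matrix m n ℝ)
    (w : EuclideanSpace ℝ n) :
    ‖toLpLin 2 2 X w‖ ^ 2 = ∑ i, (X *ᵥ WithLp.ofLp w) i ^ 2 := by
  rw [EuclideanSpace.real_norm_sq_eq]
  rfl

end Matrix

theorem stmt8_general (d n : ℕ) (X Y : Matrix (Fin d) (Fin n) ℝ)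
    (h : ∀ (w : Fin n → ℝ) (W : Matrix (Fin n) (Fin d) ℝ),
      (∑ i, (X.mulVec w i) ^ 2) + (X * W).det = (∑ i, (Y.mulVec w i) ^ 2) + (Y * W).det) :
    ∃ R : Matrix (Fin d) (Fin d) ℝ, Rᵀ * R = 1 ∧ R.det = 1 ∧ Y = R * X := by
  have hnorm (w : EuclideanSpace ℝ (Fin n)) : ‖toLpLin 2 2 X w‖ = ‖toLpLin 2 2 Y w‖ := by
    rw [← sq_eq_sq₀ (norm_nonneg _) (norm_nonneg _), norm_toLpLin_sq, norm_toLpLin_sq]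
    simpa using h (WithLp.ofLp w) 0
  have hdet (S : EuclideanSpace ℝ (Fin d) →ₗ[ℝ] EuclideanSpace ℝ (Fin n)) :
      LinearMap.det (toLpLin 2 2 X ∘ₗ S) = LinearMap.det (toLpLin 2 2 Y ∘ₗ S) := by
    obtain ⟨W, rfl⟩ := (toLpLin 2 2).surjective S
    simpa [← toLpLin_mul_same] using h 0 W
  obtain ⟨T, hT₁, hT⟩ := exists_linearIsometryEquiv_det_eq_one_apply_eq hnorm hdet
  refine ⟨(toLpLin 2 2).symm T.toLinearMap,
    (mem_orthogonalGroup_iff' ..).mp (toLpLin_symm_mem_orthogonalGroup T), ?_, ?_⟩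
  · rw [← LinearMap.det_toLpLin 2, LinearEquiv.apply_symm_apply, hT₁]
  · apply (toLpLin 2 2).injective
    ext1 w
    simp [hT]

theorem stmt8 (d n : ℕ) (hdn : d ≤ n) (X Y : Matrix (Fin d) (Fin n) ℝ)
    (h : ∀ (w : Fin n → ℝ) (W : Matrix (Fin n) (Fin d) ℝ),
      (∑ i, (X.mulVec w i) ^ 2) + (X * W).det = (∑ i, (Y.mulVec w i) ^ 2) + (Y * W).det) :
    ∃ R : Matrix (Fin d) (Fin d) ℝ, Rᵀ * R = 1 ∧ R.det = 1 ∧ Y = R * X :=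
  stmt8_general d n X Y h
end

section
/- Let n ≥ d and let X, Y ∈ ℝ^{d×n} with X of rank d. If det²(XW)/det(XXᵀ) = det²(YW)/det(YYᵀ) for all W ∈ ℝ^{n×d} (where Y is also assumed to have rank d so both denominators are nonzero), then there exists an invertible matrix A ∈ GL(d, ℝ) such that Y = AX. -/
/-!
At `W = Xᵀ` the hypothesis shows that `B = Y Xᵀ` is invertible. Taking `W = Xᵀ + v wᵀ` with
`X v = 0` leaves `X W = X Xᵀ` unchanged, so `det (B + (Y v) wᵀ) ^ 2 = det B ^ 2` for every `w`.
By the matrix determinant lemma this forces `Y v = 0`, i.e. `ker X ⊆ ker Y`, and then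
`Y = A X` with `A = B (X Xᵀ)⁻¹`.
-/

open Matrix

namespace Matrix

variable {n R : Type*} [Fintype n]

theorem isUnit_of_rank_eq_card [DecidableEq n] {K : Type*} [Field K] {A : Matrix n n K}
    (hA : A.rank = Fintype.card n) : IsUnit A := by
  rw [← mulVec_surjective_iff_isUnit, ← Set.range_eq_univ, ← coe_mulVecLin,
    ← LinearMap.coe_range, Submodule.coe_eq_univ]
  exact Submodule.eq_top_of_finrank_eq (by simpa [rank] using hA)

theorem det_add_vecMulVec [DecidableEq n] [CommRing R] {A : Matrix n n R} (hA : IsUnit A.det)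
    (u v : n → R) :
    (A + vecMulVec u v).det = A.det * (1 + v ⬝ᵥ A⁻¹ *ᵥ u) := by
  have hfactor : A + vecMulVec u v = A * (1 + vecMulVec (A⁻¹ *ᵥ u) v) := by
    rw [Matrix.mul_add, mul_vecMulVec, mulVec_mulVec, mul_nonsing_inv _ hA, one_mulVec,
      Matrix.mul_one]
  rw [hfactor, det_mul, vecMulVec_eq Unit, det_one_add_replicateCol_mul_replicateRow]

theorem eq_zero_of_forall_det_add_vecMulVec_sq [DecidableEq n] [Field R] [LinearOrder R]
    [IsStrictOrderedRing R] {A : Matrix n n R} (hA : IsUnit A.det) {u : n → R}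
    (h : ∀ w, (A + vecMulVec u w).det ^ 2 = A.det ^ 2) : u = 0 := by
  -- with `w = ± A⁻¹ u` the determinant lemma gives `(1 ± s ⬝ᵥ s) ^ 2 = 1`
  set s := A⁻¹ *ᵥ u
  have hplus := h s
  have hminus := h (-s)
  rw [det_add_vecMulVec hA] at hplus hminus
  rw [neg_dotProduct] at hminus
  have hdet : A.det ^ 2 ≠ 0 := pow_ne_zero 2 hA.ne_zero
  have hss : s ⬝ᵥ s = 0 := by
    have h₁ : (1 + s ⬝ᵥ s) ^ 2 = 1 := by
      apply mul_left_cancel₀ hdet; linear_combination hplus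
    have h₂ : (1 + -(s ⬝ᵥ s)) ^ 2 = 1 := by
      apply mul_left_cancel₀ hdet; linear_combination hminus
    nlinarith
  have hs : s = 0 := dotProduct_self_eq_zero.mp hss
  calc u = A *ᵥ s := by rw [mulVec_mulVec, mul_nonsing_inv _ hA, one_mulVec]
    _ = 0 := by rw [hs, mulVec_zero]

theorem eq_mul_mul_of_ker_le [CommRing R] {m p : Type*} [Fintype m] [DecidableEq m]
    {X : Matrix m n R} {Y : Matrix p n R} {G : Matrix n m R} (hG : X * G = 1)
    (hker : ∀ v, X *ᵥ v = 0 → Y *ᵥ v = 0) : Y = Y * G * X := by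
  refine ext_iff_mulVec.mpr fun v => ?_
  have hXv : X *ᵥ (v - G *ᵥ X *ᵥ v) = 0 := by
    rw [mulVec_sub, mulVec_mulVec, hG, one_mulVec, sub_self]
  rw [← sub_eq_zero, ← mulVec_mulVec, ← mulVec_mulVec, ← mulVec_sub]
  exact hker _ hXv

end Matrix

theorem stmt10_general (d n : ℕ)
    (X Y : Matrix (Fin d) (Fin n) ℝ)
    (hX : X.rank = d)
    (h : ∀ W : Matrix (Fin n) (Fin d) ℝ,
      (X * W).det ^ 2 / (X * Xᵀ).det = (Y * W).det ^ 2 / (Y * Yᵀ).det) :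
    ∃ A : Matrix (Fin d) (Fin d) ℝ, IsUnit A ∧ Y = A * X := by
  have hXX : IsUnit (X * Xᵀ).det :=
    (isUnit_iff_isUnit_det _).mp (isUnit_of_rank_eq_card (by simp [hX]))
  set B := Y * Xᵀ
  have hq : (X * Xᵀ).det ^ 2 / (X * Xᵀ).det ≠ 0 := by
    rw [sq, mul_div_cancel_right₀ _ hXX.ne_zero]; exact hXX.ne_zero
  obtain ⟨hB, hYY⟩ : B.det ≠ 0 ∧ (Y * Yᵀ).det ≠ 0 := by
    rwa [h Xᵀ, div_ne_zero_iff, pow_ne_zero_iff two_ne_zero] at hq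
  have hker : ∀ v, X *ᵥ v = 0 → Y *ᵥ v = 0 := fun v hv =>
    eq_zero_of_forall_det_add_vecMulVec_sq hB.isUnit fun w => by
      have hW := h (Xᵀ + vecMulVec v w)
      rw [Matrix.mul_add, Matrix.mul_add, mul_vecMulVec, mul_vecMulVec, hv, zero_vecMulVec,
        add_zero, h Xᵀ, div_left_inj' hYY] at hW
      exact hW.symm
  have hG : X * (Xᵀ * (X * Xᵀ)⁻¹) = 1 := by rw [← Matrix.mul_assoc, mul_nonsing_inv _ hXX]
  refine ⟨B * (X * Xᵀ)⁻¹, ?_, ?_⟩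
  · exact ((isUnit_iff_isUnit_det B).mpr hB.isUnit).mul
      (isUnit_nonsing_inv_iff.mpr ((isUnit_iff_isUnit_det _).mpr hXX))
  · simpa only [B, Matrix.mul_assoc] using eq_mul_mul_of_ker_le hG hker

theorem stmt10 (d n : ℕ) (hdn : d ≤ n)
    (X Y : Matrix (Fin d) (Fin n) ℝ)
    (hX : X.rank = d) (hY : Y.rank = d)
    (h : ∀ W : Matrix (Fin n) (Fin d) ℝ,
      (X * W).det ^ 2 / (X * Xᵀ).det = (Y * W).det ^ 2 / (Y * Yᵀ).det) :
    ∃ A : Matrix (Fin d) (Fin d) ℝ, IsUnit A ∧ Y = A * X :=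
  stmt10_general d n X Y hX h
end

section
/- Let A, B be symmetric n×n real matrices (n > 2) with zero diagonal and nonnegative entries. Suppose: (i) all sums of distinct subsets of the strictly-below-diagonal entries of A are pairwise distinct; (ii) the multiset of row sums of A equals the multiset of row sums of B; (iii) the multiset of above-diagonal entries {A_{ij} : i < j} equals the multiset {B_{ij} : i < j}. Then there exists a permutation matrix P such that B = P A Pᵀ. -/
/-!
Distinct subset sums force the off-diagonal entries of `A` to be pairwise distinct (up to the
symmetry `A i j = A j i`), and the same then holds for `B`, which has the same entries. Hence each
row sum is the sum of the *set* of off-diagonal values in that row, a subset of the common value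
set `W`. As the subsets of `W` have distinct sums, a row sum determines the set of values in its
row, and for `n ≥ 3` that set determines the row. So the row sums of `A` are distinct, and the
equality of row-sum multisets gives `σ` with `rowSum B i = rowSum A (σ i)`; then row `i` of `B` and
row `σ i` of `A` carry the same set of values. Finally `B i j` lies in the value sets of rows
`σ i` and `σ j` of `A`, and the only value these share is `A (σ i) (σ j)`.
-/

open Matrix

open Finset Function

section SubsetSums

variable {α M : Type*} [AddCommMonoid M] {f : α → M} {s : Finset α}

theorem injOn_of_injOn_subsetSums (h : Set.InjOn (fun S => ∑ p ∈ S, f p) {S | S ⊆ s}) :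
    Set.InjOn f s := fun p hp q hq hpq =>
  singleton_injective (h (by simpa using hp) (by simpa using hq) (by simpa using hpq))

theorem injOn_subsetSums_image [DecidableEq M]
    (h : Set.InjOn (fun S => ∑ p ∈ S, f p) {S | S ⊆ s}) :
    Set.InjOn (fun V => ∑ v ∈ V, v) {V | V ⊆ s.image f} := by
  have hf := injOn_of_injOn_subsetSums h
  have hpre : ∀ V ⊆ s.image f, (s.filter (f · ∈ V)).image f = V := fun V hV => by
    rw [← filter_image (p := (· ∈ V)), filter_mem_eq_inter, inter_eq_right.2 hV]
  intro V hV W hW hVW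
  rw [← hpre V hV, ← hpre W hW] at hVW ⊢
  dsimp only at hVW
  rw [sum_image (hf.mono (coe_subset.2 (filter_subset _ s))),
    sum_image (hf.mono (coe_subset.2 (filter_subset _ s)))] at hVW
  rw [h (filter_subset _ s) (filter_subset _ s) hVW]

end SubsetSums

theorem exists_perm_apply_eq_of_map_univ_eq {ι α : Type*} [Fintype ι] {f g : ι → α}
    (hf : Injective f) (h : univ.val.map f = univ.val.map g) :
    ∃ σ : Equiv.Perm ι, ∀ i, g i = f (σ i) := by
  have hex : ∀ i, ∃ k, f k = g i := fun i => by
    obtain ⟨k, -, hk⟩ := Multiset.mem_map.1 (h ▸ Multiset.mem_map_of_mem g (mem_univ i))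
    exact ⟨k, hk⟩
  choose τ hτ using hex
  have hg : Injective g := fun i j hij =>
    univ.nodup_map_iff_injOn.1 (h ▸ univ.nodup.map hf) (mem_univ i) (mem_univ j) hij
  have hτinj : Injective τ := fun i j hij => hg (by rw [← hτ, ← hτ, hij])
  exact ⟨Equiv.ofBijective τ (Finite.injective_iff_bijective.1 hτinj), fun i => (hτ i).symm⟩

def lowerPairs (ι : Type*) [Fintype ι] [LinearOrder ι] : Finset (ι × ι) :=
  univ.filter fun p => p.2 < p.1

namespace Matrix

variable {ι R : Type*}

theorem permMatrix_mul_mul_transpose {n : Type*} [Fintype n] [DecidableEq n]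
    [NonAssocSemiring R] (σ : Equiv.Perm n) (A : Matrix n n R) :
    σ.permMatrix R * A * (σ.permMatrix R)ᵀ = A.submatrix σ σ := by
  rw [transpose_permMatrix, Equiv.Perm.permMatrix, Equiv.Perm.permMatrix,
    PEquiv.toMatrix_toPEquiv_mul, PEquiv.mul_toMatrix_toPEquiv]
  rfl

def OffDiagInjective (M : Matrix ι ι R) : Prop :=
  ∀ ⦃i j k l⦄, i ≠ j → k ≠ l → M i j = M k l → i = k ∧ j = l ∨ i = l ∧ j = k

section
variable [Fintype ι] [LinearOrder ι] {M : Matrix ι ι R}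

theorem map_lowerPairs_eq_map_upperPairs (hM : M.IsSymm) :
    (lowerPairs ι).val.map (fun p => M p.1 p.2) =
      (univ.filter fun p : ι × ι => p.1 < p.2).val.map fun p => M p.1 p.2 := by
  have : lowerPairs ι = (univ.filter fun p : ι × ι => p.1 < p.2).map
      (Equiv.prodComm ι ι).toEmbedding := by
    ext ⟨a, b⟩; simp [lowerPairs]
  rw [this, map_val, Multiset.map_map]
  exact Multiset.map_congr rfl fun p _ => hM.apply p.1 p.2

theorem offDiagInjective_of_injOn_lowerPairs (hM : M.IsSymm)
    (h : Set.InjOn (fun p : ι × ι => M p.1 p.2) (lowerPairs ι)) : M.OffDiagInjective := by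
  have hnorm : ∀ a b : ι, a ≠ b →
      (max a b, min a b) ∈ lowerPairs ι ∧ M a b = M (max a b) (min a b) := fun a b hab => by
    rcases hab.lt_or_gt with hab | hab
    · simp [lowerPairs, hab, hab.le, hM.apply]
    · simp [lowerPairs, hab, hab.le]
  intro i j k l hij hkl hval
  obtain ⟨hij₁, hij₂⟩ := hnorm i j hij
  obtain ⟨hkl₁, hkl₂⟩ := hnorm k l hkl
  have := h hij₁ hkl₁ (show M _ _ = M _ _ by rw [← hij₂, ← hkl₂, hval])
  grind

variable [DecidableEq R]

def rowValues (M : Matrix ι ι R) (i : ι) : Finset R :=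
  (univ.erase i).image (M i)

theorem mem_rowValues_of_ne {i j : ι} (hij : i ≠ j) : M i j ∈ M.rowValues i :=
  mem_image_of_mem _ (mem_erase.2 ⟨hij.symm, mem_univ j⟩)

theorem rowValues_subset_image_lowerPairs (hM : M.IsSymm) (i : ι) :
    M.rowValues i ⊆ (lowerPairs ι).image fun p => M p.1 p.2 := by
  rintro _ hv
  obtain ⟨j, hj, rfl⟩ := mem_image.1 hv
  rcases (ne_of_mem_erase hj).lt_or_gt with hji | hji
  · exact mem_image.2 ⟨(i, j), by simp [lowerPairs, hji], rfl⟩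
  · exact mem_image.2 ⟨(j, i), by simp [lowerPairs, hji], hM.apply i j⟩

theorem sum_row_eq_sum_rowValues [AddCommMonoid R] (hM : M.OffDiagInjective)
    (hdiag : ∀ i, M i i = 0) (i : ι) : ∑ j, M i j = ∑ v ∈ M.rowValues i, v := by
  rw [rowValues, sum_image, sum_erase _ (hdiag i)]
  intro j hj k hk hjk
  have := hM (ne_of_mem_erase hj).symm (ne_of_mem_erase hk).symm hjk
  grind

theorem rowValues_injective (hM : M.OffDiagInjective) (hι : 2 < Fintype.card ι) :
    Injective M.rowValues := by
  intro i k hik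
  by_contra hne
  obtain ⟨x, hxi, hxk⟩ := ENat.exists_ne_ne_of_three_le
    (by rw [ENat.card_eq_coe_fintype_card]; exact_mod_cast hι) i k
  obtain ⟨y, hy, hxy⟩ := mem_image.1 (hik ▸ mem_rowValues_of_ne hxi.symm)
  have := hM (ne_of_mem_erase hy).symm hxi.symm hxy
  grind

theorem eq_of_mem_rowValues_of_mem_rowValues (hM : M.OffDiagInjective) {v : R} {k l : ι}
    (hk : v ∈ M.rowValues k) (hl : v ∈ M.rowValues l) (hkl : k ≠ l) : v = M k l := by
  obtain ⟨x, hx, rfl⟩ := mem_image.1 hk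
  obtain ⟨y, hy, hxy⟩ := mem_image.1 hl
  have := hM (ne_of_mem_erase hy).symm (ne_of_mem_erase hx).symm hxy
  grind

theorem exists_perm_apply_eq_of_rowSums_of_entries [AddCommMonoid R] {A B : Matrix ι ι R}
    (hι : 2 < Fintype.card ι) (hA : A.IsSymm) (hB : B.IsSymm)
    (hAdiag : ∀ i, A i i = 0) (hBdiag : ∀ i, B i i = 0)
    (hgeneric : Set.InjOn (fun S => ∑ p ∈ S, A p.1 p.2) {S | S ⊆ lowerPairs ι})
    (hrows : univ.val.map (fun i => ∑ j, A i j) = univ.val.map fun i => ∑ j, B i j)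
    (hentries : (lowerPairs ι).val.map (fun p => A p.1 p.2) =
      (lowerPairs ι).val.map fun p => B p.1 p.2) :
    ∃ σ : Equiv.Perm ι, ∀ i j, B i j = A (σ i) (σ j) := by
  have hAinj : A.OffDiagInjective :=
    offDiagInjective_of_injOn_lowerPairs hA (injOn_of_injOn_subsetSums hgeneric)
  have hBinj : B.OffDiagInjective := by
    refine offDiagInjective_of_injOn_lowerPairs hB (nodup_map_iff_injOn.1 ?_)
    rw [← hentries]
    exact nodup_map_iff_injOn.2 (injOn_of_injOn_subsetSums hgeneric)
  -- both matrices take their off-diagonal values in `W`, whose subset sums are distinct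
  set W := (lowerPairs ι).image fun p => A p.1 p.2
  have hW : Set.InjOn (fun V => ∑ v ∈ V, v) {V | V ⊆ W} := injOn_subsetSums_image hgeneric
  have hBW : (lowerPairs ι).image (fun p => B p.1 p.2) = W := by
    simp only [W, Finset.image, hentries]
  have hrowA : Injective fun i => ∑ j, A i j := by
    intro i k hik
    simp only [sum_row_eq_sum_rowValues hAinj hAdiag] at hik
    exact rowValues_injective hAinj hι (hW (rowValues_subset_image_lowerPairs hA i)
      (rowValues_subset_image_lowerPairs hA k) hik)
  obtain ⟨σ, hσ⟩ := exists_perm_apply_eq_of_map_univ_eq hrowA hrows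
  have hvals : ∀ i, B.rowValues i = A.rowValues (σ i) := fun i =>
    hW (hBW ▸ rowValues_subset_image_lowerPairs hB i) (rowValues_subset_image_lowerPairs hA (σ i))
      (show ∑ v ∈ _, v = ∑ v ∈ _, v by
        rw [← sum_row_eq_sum_rowValues hBinj hBdiag, ← sum_row_eq_sum_rowValues hAinj hAdiag, hσ])
  refine ⟨σ, fun i j => ?_⟩
  rcases eq_or_ne i j with rfl | hij
  · rw [hAdiag, hBdiag]
  · have hi : B i j ∈ A.rowValues (σ i) := hvals i ▸ mem_rowValues_of_ne hij
    have hj : B i j ∈ A.rowValues (σ j) := hvals j ▸ hB.apply i j ▸ mem_rowValues_of_ne hij.symm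
    exact eq_of_mem_rowValues_of_mem_rowValues hAinj hi hj (σ.injective.ne hij)

end

end Matrix

theorem stmt15_general (n : ℕ) (hn : 2 < n)
    (A B : Matrix (Fin n) (Fin n) ℝ)
    (hAsymm : Aᵀ = A) (hBsymm : Bᵀ = B)
    (hAdiag : ∀ i, A i i = 0) (hBdiag : ∀ i, B i i = 0)
    (hgeneric : ∀ S T : Finset (Fin n × Fin n),
      (∀ p ∈ S, p.2 < p.1) → (∀ p ∈ T, p.2 < p.1) →
      ∑ p ∈ S, A p.1 p.2 = ∑ p ∈ T, A p.1 p.2 → S = T)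
    (hrows : Multiset.map (fun i => ∑ j, A i j) Finset.univ.val =
      Multiset.map (fun i => ∑ j, B i j) Finset.univ.val)
    (hentries : Multiset.map (fun p : Fin n × Fin n => A p.1 p.2)
        (Finset.univ.filter (fun p : Fin n × Fin n => p.1 < p.2)).val =
      Multiset.map (fun p : Fin n × Fin n => B p.1 p.2)
        (Finset.univ.filter (fun p : Fin n × Fin n => p.1 < p.2)).val) :
    ∃ σ : Equiv.Perm (Fin n),
      B = (σ.permMatrix ℝ) * A * (σ.permMatrix ℝ)ᵀ := by
  have hlower : ∀ {S : Finset (Fin n × Fin n)}, S ⊆ lowerPairs (Fin n) → ∀ p ∈ S, p.2 < p.1 :=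
    fun hS p hp => (mem_filter.1 (hS hp)).2
  obtain ⟨σ, hσ⟩ := exists_perm_apply_eq_of_rowSums_of_entries (by simpa using hn)
    hAsymm hBsymm hAdiag hBdiag
    (fun S hS T hT hST => hgeneric S T (hlower hS) (hlower hT) hST) hrows
    (by rw [map_lowerPairs_eq_map_upperPairs hAsymm, map_lowerPairs_eq_map_upperPairs hBsymm,
      hentries])
  exact ⟨σ, by rw [permMatrix_mul_mul_transpose]; exact Matrix.ext hσ⟩

theorem stmt15 (n : ℕ) (hn : 2 < n)
    (A B : Matrix (Fin n) (Fin n) ℝ)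
    (hAsymm : Aᵀ = A) (hBsymm : Bᵀ = B)
    (hAdiag : ∀ i, A i i = 0) (hBdiag : ∀ i, B i i = 0)
    (hApos : ∀ i j, 0 ≤ A i j) (hBpos : ∀ i j, 0 ≤ B i j)
    (hgeneric : ∀ S T : Finset (Fin n × Fin n),
      (∀ p ∈ S, p.2 < p.1) → (∀ p ∈ T, p.2 < p.1) →
      ∑ p ∈ S, A p.1 p.2 = ∑ p ∈ T, A p.1 p.2 → S = T)
    (hrows : Multiset.map (fun i => ∑ j, A i j) Finset.univ.val =
      Multiset.map (fun i => ∑ j, B i j) Finset.univ.val)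
    (hentries : Multiset.map (fun p : Fin n × Fin n => A p.1 p.2)
        (Finset.univ.filter (fun p : Fin n × Fin n => p.1 < p.2)).val =
      Multiset.map (fun p : Fin n × Fin n => B p.1 p.2)
        (Finset.univ.filter (fun p : Fin n × Fin n => p.1 < p.2)).val) :
    ∃ σ : Equiv.Perm (Fin n),
      B = (σ.permMatrix ℝ) * A * (σ.permMatrix ℝ)ᵀ :=
  stmt15_general n hn A B hAsymm hBsymm hAdiag hBdiag hgeneric hrows hentries
end

section
/- Let Ψ: ℝ^n → ℝ^n be a permutation-invariant map that separates S_n-orbits (Ψ(x)=Ψ(y) implies y is a permutation of x). Let X, Y ∈ ℝ^{d×n} with columns not related by a common permutation (X ≠ YPᵀ for every permutation matrix P). Then the set of vectors w ∈ ℝ^d for which Xᵀw is a permutation of Yᵀw is contained in a finite union of hyperplanes, hence has Lebesgue measure zero in ℝ^d; consequently for almost every w ∈ ℝ^d, Ψ(Xᵀw) ≠ Ψ(Yᵀw). -/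
/-!
If `(Xᵀ w) ∘ σ = Yᵀ w`, then `w` is orthogonal to every column of `X σ - Y` (columns of `X`
permuted by `σ`), and this matrix has a nonzero column because `X` is not a column permutation of
`Y`. So the bad set lies in finitely many hyperplanes, one per permutation, each Lebesgue-null;
since `Ψ` separates orbits, `Ψ (Xᵀ w) = Ψ (Yᵀ w)` only on that bad set.
-/

open Matrix MeasureTheory

lemma volume_setOf_sum_mul_eq_zero {ι : Type*} [Fintype ι] {c : ι → ℝ} (hc : c ≠ 0) :
    volume {w : ι → ℝ | ∑ a, c a * w a = 0} = 0 := by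
  classical
  refine Measure.addHaar_submodule volume (LinearMap.ker (dotProductBilin ℝ ℝ c)) fun htop => hc ?_
  ext a
  simpa using LinearMap.congr_fun (LinearMap.ker_eq_top.mp htop) (Pi.single a 1)

namespace Matrix

variable {R m n : Type*}

lemma exists_col_ne_zero [Zero R] {A : Matrix m n R} (hA : A ≠ 0) :
    ∃ j, (fun i => A i j) ≠ 0 := by
  contrapose! hA
  exact Matrix.ext fun i j => congrFun (hA j) i

lemma mul_transpose_permMatrix [NonAssocSemiring R] [Fintype n] [DecidableEq n]
    (Y : Matrix m n R) (σ : Equiv.Perm n) : Y * (σ.permMatrix R)ᵀ = Y.submatrix id σ := by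
  simp [PEquiv.mul_toMatrix_toPEquiv, Equiv.Perm.inv_def]

lemma transpose_mulVec_comp [NonUnitalNonAssocSemiring R] [Fintype m]
    (X : Matrix m n R) (σ : Equiv.Perm n) (w : m → R) :
    (Xᵀ *ᵥ w) ∘ σ = (X.submatrix id σ)ᵀ *ᵥ w :=
  rfl

end Matrix

theorem stmt17_general (d n : ℕ)
    (Ψ : (Fin n → ℝ) → (Fin n → ℝ))
    (hΨsep : ∀ x y : Fin n → ℝ, Ψ x = Ψ y → ∃ σ : Equiv.Perm (Fin n), y = x ∘ σ)
    (X Y : Matrix (Fin d) (Fin n) ℝ)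
    (hnot : ¬ ∃ σ : Equiv.Perm (Fin n), X = Y * (σ.permMatrix ℝ)ᵀ) :
    (∃ (k : ℕ) (c : Fin k → (Fin d → ℝ)), (∀ i, c i ≠ 0) ∧
      {w : Fin d → ℝ | ∃ σ : Equiv.Perm (Fin n), Xᵀ.mulVec w ∘ σ = Yᵀ.mulVec w} ⊆
        ⋃ i, {w : Fin d → ℝ | ∑ a, c i a * w a = 0}) ∧
    volume {w : Fin d → ℝ | ∃ σ : Equiv.Perm (Fin n), Xᵀ.mulVec w ∘ σ = Yᵀ.mulVec w} = 0 ∧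
    ∀ᵐ w : Fin d → ℝ, Ψ (Xᵀ.mulVec w) ≠ Ψ (Yᵀ.mulVec w) := by
  set S := {w : Fin d → ℝ | ∃ σ : Equiv.Perm (Fin n), Xᵀ.mulVec w ∘ σ = Yᵀ.mulVec w}
  have hD : ∀ σ : Equiv.Perm (Fin n), X.submatrix id σ - Y ≠ 0 := fun σ h =>
    hnot ⟨σ⁻¹, by rw [mul_transpose_permMatrix, ← sub_eq_zero.mp h]; ext; simp⟩
  choose j hj using fun σ => exists_col_ne_zero (hD σ)
  set c : Equiv.Perm (Fin n) → Fin d → ℝ := fun σ a => (X.submatrix id σ - Y) a (j σ)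
  have hS : S ⊆ ⋃ σ, {w | ∑ a, c σ a * w a = 0} := by
    rintro w ⟨σ, hσ⟩
    have hker : (X.submatrix id σ - Y)ᵀ *ᵥ w = 0 := by
      rw [transpose_sub, sub_mulVec, ← transpose_mulVec_comp, hσ, sub_self]
    exact Set.mem_iUnion.2 ⟨σ, congrFun hker (j σ)⟩
  have hnull : volume S = 0 :=
    measure_mono_null hS (measure_iUnion_null fun σ => volume_setOf_sum_mul_eq_zero (hj σ))
  let e := (Fintype.equivFin (Equiv.Perm (Fin n))).symm
  refine ⟨⟨_, c ∘ e, fun i => hj (e i), hS.trans (e.surjective.iUnion_comp _).ge⟩, hnull, ?_⟩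
  refine measure_mono_null (fun w hw => ?_) hnull
  obtain ⟨σ, hσ⟩ := hΨsep _ _ (not_not.1 hw)
  exact ⟨σ, hσ.symm⟩

theorem stmt17 (d n : ℕ)
    (Ψ : (Fin n → ℝ) → (Fin n → ℝ))
    (hΨinv : ∀ (σ : Equiv.Perm (Fin n)) (x : Fin n → ℝ), Ψ (x ∘ σ) = Ψ x)
    (hΨsep : ∀ x y : Fin n → ℝ, Ψ x = Ψ y → ∃ σ : Equiv.Perm (Fin n), y = x ∘ σ)
    (X Y : Matrix (Fin d) (Fin n) ℝ)
    (hnot : ¬ ∃ σ : Equiv.Perm (Fin n), X = Y * (σ.permMatrix ℝ)ᵀ) :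
    (∃ (k : ℕ) (c : Fin k → (Fin d → ℝ)), (∀ i, c i ≠ 0) ∧
      {w : Fin d → ℝ | ∃ σ : Equiv.Perm (Fin n), Xᵀ.mulVec w ∘ σ = Yᵀ.mulVec w} ⊆
        ⋃ i, {w : Fin d → ℝ | ∑ a, c i a * w a = 0}) ∧
    volume {w : Fin d → ℝ | ∃ σ : Equiv.Perm (Fin n), Xᵀ.mulVec w ∘ σ = Yᵀ.mulVec w} = 0 ∧
    ∀ᵐ w : Fin d → ℝ, Ψ (Xᵀ.mulVec w) ≠ Ψ (Yᵀ.mulVec w) :=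
  stmt17_general d n Ψ hΨsep X Y hnot
end

section
/- Let M be a topological space, G a group acting on M, K ⊆ M compact, and f_inv: M → ℝ^N a continuous G-invariant map that separates orbits (f_inv(x) = f_inv(y) implies x = g·y for some g ∈ G). Then for every continuous G-invariant function f: M → ℝ there exists a continuous function h: ℝ^N → ℝ such that f(x) = h(f_inv(x)) for all x ∈ K. -/
/-!
On the compact set `K`, the map `finv` is a closed map onto its compact image `finv '' K`, hence
a quotient map. Since `f` is constant on orbits and `finv` separates orbits, `f` is constant on
the fibres of `finv`, so it descends to a continuous function on `finv '' K`. This image is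
closed, and the Tietze extension theorem extends that function to all of `ℝ^N`.
-/

open Set Topology

universe u v

theorem IsCompact.isQuotientMap_imageFactorization {X Y : Type*} [TopologicalSpace X]
    [TopologicalSpace Y] [T2Space Y] {K : Set X} (hK : IsCompact K) {p : X → Y}
    (hp : ContinuousOn p K) : IsQuotientMap (K.imageFactorization p) := by
  have : CompactSpace K := isCompact_iff_compactSpace.mp hK
  have hcont : Continuous (K.imageFactorization p) :=
    (continuousOn_iff_continuous_domRestrict.mp hp).subtype_mk _
  exact hcont.isClosedMap.isQuotientMap hcont imageFactorization_surjective

theorem IsCompact.exists_continuousMap_eqOn_comp {X : Type*} {Y : Type u} {Z : Type v}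
    [TopologicalSpace X] [TopologicalSpace Y] [T4Space Y] [TopologicalSpace Z]
    [TietzeExtension.{u, v} Z]
    {K : Set X} (hK : IsCompact K) {p : X → Y} (hp : ContinuousOn p K) {f : X → Z}
    (hf : ContinuousOn f K) (hfib : ∀ x ∈ K, ∀ y ∈ K, p x = p y → f x = f y) :
    ∃ h : C(Y, Z), EqOn f (h ∘ p) K := by
  let fK : C(K, Z) := ⟨K.domRestrict f, continuousOn_iff_continuous_domRestrict.mp hf⟩
  let q : C(K, p '' K) :=
    ⟨K.imageFactorization p, (hK.isQuotientMap_imageFactorization hp).continuous⟩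
  have hq : IsQuotientMap q := hK.isQuotientMap_imageFactorization hp
  have hfactors : Function.FactorsThrough fK q := fun x y hxy ↦
    hfib x x.2 y y.2 (congrArg Subtype.val hxy)
  let g := hq.lift fK hfactors
  obtain ⟨h, hh⟩ := g.exists_restrict_eq (hK.image_of_continuousOn hp).isClosed
  refine ⟨h, fun x hx ↦ ?_⟩
  have hg : g ⟨p x, mem_image_of_mem p hx⟩ = f x :=
    DFunLike.congr_fun (hq.lift_comp fK hfactors) ⟨x, hx⟩
  rw [← hg, ← hh]
  rfl

theorem stmt18_general {M : Type*} [TopologicalSpace M] {G : Type*} [Group G] [MulAction G M]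
    (K : Set M) (hK : IsCompact K) (N : ℕ)
    (finv : M → (Fin N → ℝ)) (hfinv_cont : Continuous finv)
    (hfinv_sep : ∀ x y : M, finv x = finv y → ∃ g : G, x = g • y)
    (f : M → ℝ) (hf_cont : Continuous f)
    (hf_inv : ∀ (g : G) (x : M), f (g • x) = f x) :
    ∃ h : (Fin N → ℝ) → ℝ, Continuous h ∧ ∀ x ∈ K, f x = h (finv x) := by
  have hfib : ∀ x ∈ K, ∀ y ∈ K, finv x = finv y → f x = f y := by
    intro x _ y _ hxy
    obtain ⟨g, rfl⟩ := hfinv_sep x y hxy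
    exact hf_inv g y
  obtain ⟨h, hh⟩ :=
    hK.exists_continuousMap_eqOn_comp hfinv_cont.continuousOn hf_cont.continuousOn hfib
  exact ⟨h, h.continuous, hh⟩

theorem stmt18 {M : Type*} [TopologicalSpace M] {G : Type*} [Group G] [MulAction G M]
    (K : Set M) (hK : IsCompact K) (N : ℕ)
    (finv : M → (Fin N → ℝ)) (hfinv_cont : Continuous finv)
    (hfinv_inv : ∀ (g : G) (x : M), finv (g • x) = finv x)
    (hfinv_sep : ∀ x y : M, finv x = finv y → ∃ g : G, x = g • y)
    (f : M → ℝ) (hf_cont : Continuous f)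
    (hf_inv : ∀ (g : G) (x : M), f (g • x) = f x) :
    ∃ h : (Fin N → ℝ) → ℝ, Continuous h ∧ ∀ x ∈ K, f x = h (finv x) :=
  stmt18_general K hK N finv hfinv_cont hfinv_sep f hf_cont hf_inv
end
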